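/- arXiv:1806.05489 — 7 statements merged into one kernel-verified Lean document; each statement's English description precedes it below -/
import Mathlib

section
/- Let w be a σ-special surmultiplicative v-value function on an F-algebra A with involution σ. Then the associated graded ring gr_w(A) = ⊕_γ A_{≥γ}/A_{>γ} is semisimple, i.e., it contains no nonzero homogeneous two-sided nilpotent ideal. -/
/-!
Suppose `x ∈ I γ` has nonzero image in degree `γ` of the nilpotent ideal, i.e. `w x = γ`.
Since `w` is `σ`-special it is `σ`-invariant, so `y = σ x * x` is a `σ`-symmetric element of the
ideal of value exactly `2γ`. For a symmetric `y`, specialness applied to `y ^ 2 ^ k` doubles the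
value at every squaring, so `w (y ^ 2 ^ k) = 2 ^ k • w y`. Nilpotency gives `w (y ^ m) > m • w y`,
and by surmultiplicativity this strict inequality persists for all larger powers, in particular
for `y ^ 2 ^ m`: a contradiction.
-/

section Involution

variable {A : Type*} [Monoid A] {σ : A → A}

theorem map_one_of_antimul_involutive (hσmul : ∀ x y, σ (x * y) = σ y * σ x)
    (hσinv : ∀ x, σ (σ x) = x) : σ 1 = 1 := by
  simpa [hσinv] using (hσmul (σ 1) 1).symm

theorem map_pow_of_map_eq_self (hσmul : ∀ x y, σ (x * y) = σ y * σ x)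
    (hσinv : ∀ x, σ (σ x) = x) {y : A} (hy : σ y = y) (n : ℕ) : σ (y ^ n) = y ^ n := by
  induction n with
  | zero => simpa using map_one_of_antimul_involutive hσmul hσinv
  | succ n ih => rw [pow_succ', hσmul, ih, hy, pow_mul_comm']

theorem apply_pow_two_pow_of_map_eq_self {M : Type*} [AddMonoid M] {w : A → M}
    (hσmul : ∀ x y, σ (x * y) = σ y * σ x) (hσinv : ∀ x, σ (σ x) = x)
    (hwspec : ∀ x, w (σ x * x) = w x + w x) {y : A} (hy : σ y = y)
    (k : ℕ) : w (y ^ 2 ^ k) = 2 ^ k • w y := by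
  induction k with
  | zero => simp
  | succ k ih =>
    have hspec := hwspec (y ^ 2 ^ k)
    rw [map_pow_of_map_eq_self hσmul hσinv hy] at hspec
    rw [pow_succ, pow_mul, sq, hspec, ih, mul_nsmul, two_nsmul]

end Involution

section ValueFunction

variable {A Γ : Type*} [Monoid A] [AddCommMonoid Γ] [LinearOrder Γ] [IsOrderedCancelAddMonoid Γ]
  {σ : A → A} {w : A → WithTop Γ}

theorem le_apply_map_of_special (hσinv : ∀ x, σ (σ x) = x) (hwmul : ∀ x y, w x + w y ≤ w (x * y))
    (hwspec : ∀ x, w (σ x * x) = w x + w x) (x : A) : w x ≤ w (σ x) := by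
  by_cases htop : w (σ x) = ⊤
  · simp [htop]
  have hspec : w (x * σ x) = w (σ x) + w (σ x) := by simpa [hσinv] using hwspec (σ x)
  have h := hwmul x (σ x)
  rwa [hspec, WithTop.add_le_add_iff_right htop] at h

theorem apply_map_eq_of_special (hσinv : ∀ x, σ (σ x) = x)
    (hwmul : ∀ x y, w x + w y ≤ w (x * y)) (hwspec : ∀ x, w (σ x * x) = w x + w x) (x : A) :
    w (σ x) = w x :=
  le_antisymm (by simpa [hσinv] using le_apply_map_of_special hσinv hwmul hwspec (σ x))
    (le_apply_map_of_special hσinv hwmul hwspec x)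

theorem lt_apply_pow_of_le (hwmul : ∀ x y, w x + w y ≤ w (x * y)) {y : A} {δ : Γ}
    (hy : (δ : WithTop Γ) ≤ w y) {m n : ℕ} (hm : ((m • δ : Γ) : WithTop Γ) < w (y ^ m))
    (hmn : m ≤ n) : ((n • δ : Γ) : WithTop Γ) < w (y ^ n) := by
  induction n, hmn using Nat.le_induction with
  | base => exact hm
  | succ n _ ih =>
    calc (((n + 1) • δ : Γ) : WithTop Γ) = ((n • δ : Γ) : WithTop Γ) + δ := by
          rw [succ_nsmul, WithTop.coe_add]
      _ < w (y ^ n) + w y := WithTop.add_lt_add_of_lt_of_le WithTop.coe_ne_top ih hy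
      _ ≤ w (y ^ (n + 1)) := pow_succ y n ▸ hwmul _ _

end ValueFunction

theorem stmt_1_general
    {A : Type*} [Ring A]
    {Γ : Type*} [AddCommGroup Γ] [LinearOrder Γ] [IsOrderedAddMonoid Γ]
    (σ : A → A)
    (hσmul : ∀ x y, σ (x * y) = σ y * σ x)
    (hσinv : ∀ x, σ (σ x) = x)
    (w : A → WithTop Γ)
    (hwmul : ∀ x y, w x + w y ≤ w (x * y))
    (hwspec : ∀ x, w (σ x * x) = w x + w x)
    -- `I` encodes a homogeneous two-sided ideal of `gr_w(A)`:
    (I : Γ → AddSubgroup A)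
    (hIge : ∀ γ : Γ, ∀ x ∈ I γ, (↑γ : WithTop Γ) ≤ w x)
    (hIl : ∀ (α β : Γ) (x y : A), (α : WithTop Γ) ≤ w x → y ∈ I β → x * y ∈ I (α + β))
    -- `I` is nilpotent:
    (hnil : ∃ m : ℕ, 0 < m ∧ ∀ (γ : Fin m → Γ) (y : Fin m → A),
        (∀ i, y i ∈ I (γ i)) → ((∑ i, γ i : Γ) : WithTop Γ) < w (List.ofFn y).prod) :
    -- then `I` is the zero ideal:
    ∀ γ : Γ, ∀ x ∈ I γ, (↑γ : WithTop Γ) < w x := by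
  intro γ x hx
  by_contra hlt
  have hwx : w x = γ := le_antisymm (not_lt.mp hlt) (hIge γ x hx)
  set y := σ x * x
  have hyI : y ∈ I (γ + γ) :=
    hIl γ γ _ _ (by rw [apply_map_eq_of_special hσinv hwmul hwspec, hwx]) hx
  have hwy : w y = ((γ + γ : Γ) : WithTop Γ) := by rw [hwspec, hwx, WithTop.coe_add]
  have hσy : σ y = y := by rw [hσmul, hσinv]
  obtain ⟨m, -, hm⟩ := hnil
  have hym : ((m • (γ + γ) : Γ) : WithTop Γ) < w (y ^ m) := by
    simpa [List.ofFn_const, List.prod_replicate] using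
      hm (fun _ => γ + γ) (fun _ => y) (fun _ => hyI)
  have h := lt_apply_pow_of_le hwmul hwy.ge hym Nat.lt_two_pow_self.le
  rw [apply_pow_two_pow_of_map_eq_self hσmul hσinv hwspec hσy, hwy, ← WithTop.coe_nsmul] at h
  exact lt_irrefl _ h

/-- Let `w` be a `σ`-special surmultiplicative `v`-value function on an
`F`-algebra `A` with involution `σ`.  Then the associated graded ring
`gr_w(A) = ⊕_γ A_{≥γ}/A_{>γ}` is semisimple, i.e. it contains no nonzero homogeneous two-sided
nilpotent ideal.

A homogeneous two-sided ideal of `gr_w(A)` is encoded by its components: a family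
`I : Γ → AddSubgroup A` with `A_{>γ} ≤ I γ ≤ A_{≥γ}` (so that `I γ / A_{>γ}` is the degree-`γ`
component), closed under left and right multiplication by homogeneous elements.  The ideal is
nilpotent if some power vanishes: products of `m` homogeneous members lie in `A_{> sum of degrees}`.
The ideal is zero iff `I γ = A_{>γ}` for all `γ`. -/
theorem stmt_1
    {F A : Type*} [Field F] [Ring A] [Algebra F A]
    {Γ : Type*} [AddCommGroup Γ] [LinearOrder Γ] [IsOrderedAddMonoid Γ]
    (σ : A → A)
    (hσadd : ∀ x y, σ (x + y) = σ x + σ y)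
    (hσmul : ∀ x y, σ (x * y) = σ y * σ x)
    (hσinv : ∀ x, σ (σ x) = x)
    (hσlin : ∀ (r : F) (x : A), σ (r • x) = r • σ x)
    (v : F → WithTop Γ)
    (hv0 : ∀ x, v x = ⊤ ↔ x = 0)
    (hvmul : ∀ x y, v (x * y) = v x + v y)
    (hvadd : ∀ x y, min (v x) (v y) ≤ v (x + y))
    (w : A → WithTop Γ)
    (hw0 : ∀ x, w x = ⊤ ↔ x = 0)
    (hwadd : ∀ x y, min (w x) (w y) ≤ w (x + y))
    (hwsmul : ∀ (r : F) (x : A), w (r • x) = v r + w x)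
    (hwone : w 1 = 0)
    (hwmul : ∀ x y, w x + w y ≤ w (x * y))
    (hwspec : ∀ x, w (σ x * x) = w x + w x)
    -- `I` encodes a homogeneous two-sided ideal of `gr_w(A)`:
    (I : Γ → AddSubgroup A)
    (hIge : ∀ γ : Γ, ∀ x ∈ I γ, (↑γ : WithTop Γ) ≤ w x)
    (hIgt : ∀ γ : Γ, ∀ x : A, (↑γ : WithTop Γ) < w x → x ∈ I γ)
    (hIl : ∀ (α β : Γ) (x y : A), (α : WithTop Γ) ≤ w x → y ∈ I β → x * y ∈ I (α + β))
    (hIr : ∀ (α β : Γ) (x y : A), (α : WithTop Γ) ≤ w x → y ∈ I β → y * x ∈ I (β + α))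
    -- `I` is nilpotent:
    (hnil : ∃ m : ℕ, 0 < m ∧ ∀ (γ : Fin m → Γ) (y : Fin m → A),
        (∀ i, y i ∈ I (γ i)) → ((∑ i, γ i : Γ) : WithTop Γ) < w (List.ofFn y).prod) :
    -- then `I` is the zero ideal:
    ∀ γ : Γ, ∀ x ∈ I γ, (↑γ : WithTop Γ) < w x :=
  stmt_1_general σ hσmul hσinv w hwmul hwspec I hIge hIl hnil
end

section
/- Let A be an F-algebra with F-linear involution σ, let P be an ordering on F, and let 𝒫 be a prepositive cone on (A,σ) over P. Let L be any subfield of Z(A) ∩ Sym(A,σ) containing F. Then P extends to an ordering on L. -/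
/-!
The elements `x ∈ L` with `x 𝒫 ⊆ 𝒫` form a preordering of `L`: it contains every square since
`x² a = σ(x) a x` for central symmetric `x`, it contains `P` by (P4), and it misses `-1` because
`𝒫` has a nonzero element `a` (otherwise every scalar would stabilise `𝒫`, i.e. `P = F`) and
`𝒫 ∩ -𝒫 = {0}`. By Zorn's lemma this preordering lies in a maximal one, and a maximal
preordering `O` of a field is an ordering: if `x, -x ∉ O`, then `O + x O` is a larger
preordering. An ordering of `L` containing `P` meets `F` in exactly `P`.
-/

namespace RingPreordering

section CommRing

variable {R : Type*} [CommRing R]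

theorem bddAbove_of_isChain {c : Set (RingPreordering R)} (hc : IsChain (· ≤ ·) c)
    (hne : c.Nonempty) : BddAbove c := by
  have : Nonempty c := hne.to_subtype
  have hdir : Directed (· ≤ ·) fun P : c => P.1.toSubsemiring :=
    hc.directedOn.directed_val.mono_comp _ fun _ _ h => h
  have hmem {x : R} : x ∈ ⨆ P : c, P.1.toSubsemiring ↔ ∃ P : c, x ∈ P.1 :=
    Subsemiring.mem_iSup_of_directed hdir
  refine ⟨{ toSubsemiring := ⨆ P : c, P.1.toSubsemiring
            mem_of_isSquare' := fun hx =>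
              hmem.2 ⟨Classical.arbitrary c, RingPreordering.mem_of_isSquare _ hx⟩
            neg_one_notMem' := fun h => ?_ }, fun P hP x hx => hmem.2 ⟨⟨P, hP⟩, hx⟩⟩
  obtain ⟨P, hP⟩ := hmem.1 h
  exact P.1.neg_one_notMem hP

theorem exists_le_isMax (P : RingPreordering R) : ∃ O, P ≤ O ∧ IsMax O :=
  zorn_le_nonempty_Ici₀ P (fun _ _ hc P hP => bddAbove_of_isChain hc ⟨P, hP⟩) P le_rfl

end CommRing

section Field

variable {K : Type*} [Field K]

def adjoin (O : RingPreordering K) {x : K} (hx : -x ∉ O) : RingPreordering K :=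
  mk' {z | ∃ a ∈ O, ∃ b ∈ O, z = a + x * b}
    (by
      rintro _ _ ⟨a, ha, b, hb, rfl⟩ ⟨c, hc, d, hd, rfl⟩
      exact ⟨a + c, add_mem ha hc, b + d, add_mem hb hd, by ring⟩)
    (by
      rintro _ _ ⟨a, ha, b, hb, rfl⟩ ⟨c, hc, d, hd, rfl⟩
      exact ⟨a * c + x * x * (b * d),
        add_mem (mul_mem ha hc) (mul_mem (O.mul_self_mem x) (mul_mem hb hd)),
        a * d + b * c, add_mem (mul_mem ha hd) (mul_mem hb hc), by ring⟩)
    (fun y => ⟨y * y, O.mul_self_mem y, 0, zero_mem O, by ring⟩)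
    (by
      rintro ⟨a, ha, b, hb, hab⟩
      have hb0 : b ≠ 0 := by
        rintro rfl
        exact O.neg_one_notMem (by simpa [hab] using ha)
      refine hx ?_
      have : -x = (1 + a) * b * (b⁻¹ * b⁻¹) := by
        field_simp
        linear_combination hab
      rw [this]
      exact mul_mem (mul_mem (add_mem (one_mem O) ha) hb) (O.mul_self_mem _))

theorem le_adjoin (O : RingPreordering K) {x : K} (hx : -x ∉ O) : O ≤ O.adjoin hx :=
  fun a ha => ⟨a, ha, 0, zero_mem O, by ring⟩

theorem mem_adjoin (O : RingPreordering K) {x : K} (hx : -x ∉ O) : x ∈ O.adjoin hx :=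
  ⟨0, zero_mem O, 1, one_mem O, by ring⟩

theorem hasMemOrNegMem_of_isMax {O : RingPreordering K} (hO : IsMax O) : HasMemOrNegMem O where
  mem_or_neg_mem x := by
    by_contra! h
    exact h.1 (hO (O.le_adjoin h.2) (O.mem_adjoin h.2))

theorem exists_le_isOrdering (P : RingPreordering K) : ∃ O, P ≤ O ∧ O.IsOrdering := by
  obtain ⟨O, hPO, hO⟩ := P.exists_le_isMax
  have := hasMemOrNegMem_of_isMax hO
  exact ⟨O, hPO, { }⟩

end Field

section PrepositiveCone

variable {K A : Type*} [CommRing K] [Ring A]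

def multipliers (σ : A → A) (Pc : Set A) (ι : K →+* A)
    (hsym : ∀ x, σ (ι x) = ι x) (hcentral : ∀ x y, ι x * y = y * ι x)
    (hconj : ∀ x, ∀ a ∈ Pc, σ x * a * x ∈ Pc) (hadd : ∀ a ∈ Pc, ∀ b ∈ Pc, a + b ∈ Pc)
    (hne : ∃ a ∈ Pc, -a ∉ Pc) : RingPreordering K :=
  mk' {x | ∀ a ∈ Pc, ι x * a ∈ Pc}
    (fun hx hy a ha => by simpa only [map_add, add_mul] using hadd _ (hx a ha) _ (hy a ha))
    (fun hx hy a ha => by simpa only [map_mul, mul_assoc] using hx _ (hy a ha))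
    (fun x a ha => by
      simpa only [hsym, mul_assoc, ← hcentral x a, map_mul] using hconj (ι x) a ha)
    (fun h => by
      obtain ⟨a, ha, hna⟩ := hne
      exact hna (by simpa using h a ha))

end PrepositiveCone

theorem map_mem_iff {F K : Type*} [Field F] [Field K] (O : RingPreordering K) (φ : F →+* K)
    {P : Set F} (hP0 : 0 ∈ P) (hPtot : ∀ r, r ∈ P ∨ -r ∈ P) (hPO : ∀ r ∈ P, φ r ∈ O) (r : F) :
    φ r ∈ O ↔ r ∈ P := by
  refine ⟨fun hr => (hPtot r).elim id fun hnr => ?_, hPO r⟩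
  have hφr : φ r = 0 := O.eq_zero_of_mem_of_neg_mem hr (by simpa using hPO _ hnr)
  exact (φ.injective (hφr.trans φ.map_zero.symm)) ▸ hP0

end RingPreordering

theorem Subring.isField {A : Type*} [Ring A] [Nontrivial A] (L : Subring A)
    (hcomm : ∀ x ∈ L, ∀ y ∈ L, x * y = y * x) (hinv : ∀ x ∈ L, x ≠ 0 → ∃ y ∈ L, x * y = 1) :
    IsField L where
  exists_pair_ne := ⟨0, 1, zero_ne_one⟩
  mul_comm x y := Subtype.ext (hcomm x x.2 y y.2)
  mul_inv_cancel {x} hx := by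
    obtain ⟨y, hy, hxy⟩ := hinv x x.2 (by simpa using hx)
    exact ⟨⟨y, hy⟩, Subtype.ext hxy⟩

theorem exists_mem_ne_zero_of_smul_stabilizer_ne_univ {F A : Type*} [Zero A] [SMulZeroClass F A]
    {Pc : Set A} (h : {u : F | ∀ a ∈ Pc, u • a ∈ Pc} ≠ Set.univ) : ∃ a ∈ Pc, a ≠ 0 := by
  by_contra! hPc
  refine h (Set.eq_univ_of_forall fun u a ha => ?_)
  simpa [hPc a ha] using ha

theorem stmt_2_general
    {F A : Type*} [Field F] [Ring A] [Algebra F A]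
    (σ : A → A)
    -- `P` is an ordering on `F` (containing `0` by convention):
    (P : Set F)
    (hP0 : (0 : F) ∈ P)
    (hPtot : ∀ a : F, a ∈ P ∨ -a ∈ P)
    (hPprop : ∀ a : F, a ∈ P → -a ∈ P → a = 0)
    -- `Pc` is a prepositive cone on `(A,σ)` over `P`:
    (Pc : Set A)
    (hPcadd : ∀ a ∈ Pc, ∀ b ∈ Pc, a + b ∈ Pc)
    (hPcconj : ∀ (x : A), ∀ a ∈ Pc, σ x * a * x ∈ Pc)
    (hPcF : {u : F | ∀ a ∈ Pc, u • a ∈ Pc} = P)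
    (hPcprop : ∀ a ∈ Pc, -a ∈ Pc → a = 0)
    -- `L` is a subfield of `Z(A) ∩ Sym(A,σ)` containing `F`:
    (L : Subring A)
    (hLcentral : ∀ x ∈ L, ∀ y : A, x * y = y * x)
    (hLsym : ∀ x ∈ L, σ x = x)
    (hLF : ∀ r : F, algebraMap F A r ∈ L)
    (hLfield : ∀ x ∈ L, x ≠ 0 → ∃ y ∈ L, x * y = 1) :
    -- then `P` extends to an ordering `Q` on `L`:
    ∃ Q : Set A, Q ⊆ (L : Set A) ∧
      (∀ a ∈ Q, ∀ b ∈ Q, a + b ∈ Q) ∧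
      (∀ a ∈ Q, ∀ b ∈ Q, a * b ∈ Q) ∧
      (∀ x ∈ L, x ∈ Q ∨ -x ∈ Q) ∧
      (∀ x, x ∈ Q → -x ∈ Q → x = 0) ∧
      (∀ r : F, algebraMap F A r ∈ Q ↔ r ∈ P) := by
  have hP_ne_univ : P ≠ Set.univ := fun h =>
    one_ne_zero (hPprop 1 (h ▸ Set.mem_univ _) (h ▸ Set.mem_univ _))
  obtain ⟨a₀, ha₀, ha₀_ne⟩ := exists_mem_ne_zero_of_smul_stabilizer_ne_univ (hPcF ▸ hP_ne_univ)
  have : Nontrivial A := ⟨⟨a₀, 0, ha₀_ne⟩⟩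
  let _ : Field L := (L.isField (fun x hx y _ => hLcentral x hx y) hLfield).toField
  let Q₀ := RingPreordering.multipliers σ Pc L.subtype (fun x => hLsym x x.2)
    (fun x => hLcentral x x.2) hPcconj hPcadd ⟨a₀, ha₀, fun h => ha₀_ne (hPcprop a₀ ha₀ h)⟩
  let φ : F →+* L := (algebraMap F A).codRestrict L hLF
  have hPQ₀ : ∀ r ∈ P, φ r ∈ Q₀ := fun r hr a ha => by
    rw [← hPcF] at hr
    exact Algebra.smul_def r a ▸ hr a ha
  obtain ⟨O, hQ₀O, hO⟩ := Q₀.exists_le_isOrdering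
  refine ⟨Subtype.val '' (O : Set L), ?_, ?_, ?_, fun x hx => ?_, ?_, fun r => ?_⟩
  · exact Subtype.coe_image_subset _ _
  · rintro _ ⟨x, hx, rfl⟩ _ ⟨y, hy, rfl⟩
    exact ⟨x + y, add_mem hx hy, rfl⟩
  · rintro _ ⟨x, hx, rfl⟩ _ ⟨y, hy, rfl⟩
    exact ⟨x * y, mul_mem hx hy, rfl⟩
  · exact (mem_or_neg_mem O ⟨x, hx⟩).imp (fun h => ⟨_, h, rfl⟩) fun h => ⟨_, h, rfl⟩
  · rintro _ ⟨x, hx, rfl⟩ ⟨y, hy, hxy⟩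
    have : y = -x := Subtype.ext hxy
    simpa using O.eq_zero_of_mem_of_neg_mem hx (this ▸ hy)
  · exact Subtype.val_injective.mem_set_image.trans
      (O.map_mem_iff φ hP0 hPtot (fun r hr => hQ₀O (hPQ₀ r hr)) r)

/-- Let `A` be an `F`-algebra with `F`-linear involution `σ`, `P` an ordering on
`F`, and `Pc` a prepositive cone on `(A,σ)` over `P`.  Let `L` be any subfield of
`Z(A) ∩ Sym(A,σ)` containing `F`.  Then `P` extends to an ordering on `L`. -/
theorem stmt_2
    {F A : Type*} [Field F] [Ring A] [Algebra F A]
    (σ : A → A)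
    (hσadd : ∀ x y, σ (x + y) = σ x + σ y)
    (hσmul : ∀ x y, σ (x * y) = σ y * σ x)
    (hσinv : ∀ x, σ (σ x) = x)
    (hσlin : ∀ (r : F) (x : A), σ (r • x) = r • σ x)
    -- `P` is an ordering on `F` (containing `0` by convention):
    (P : Set F)
    (hP0 : (0 : F) ∈ P)
    (hPadd : ∀ a ∈ P, ∀ b ∈ P, a + b ∈ P)
    (hPmul : ∀ a ∈ P, ∀ b ∈ P, a * b ∈ P)
    (hPtot : ∀ a : F, a ∈ P ∨ -a ∈ P)
    (hPprop : ∀ a : F, a ∈ P → -a ∈ P → a = 0)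
    -- `Pc` is a prepositive cone on `(A,σ)` over `P`:
    (Pc : Set A)
    (hPcsym : ∀ a ∈ Pc, σ a = a)
    (hPc0 : (0 : A) ∈ Pc)
    (hPcadd : ∀ a ∈ Pc, ∀ b ∈ Pc, a + b ∈ Pc)
    (hPcconj : ∀ (x : A), ∀ a ∈ Pc, σ x * a * x ∈ Pc)
    (hPcF : {u : F | ∀ a ∈ Pc, u • a ∈ Pc} = P)
    (hPcprop : ∀ a ∈ Pc, -a ∈ Pc → a = 0)
    -- `L` is a subfield of `Z(A) ∩ Sym(A,σ)` containing `F`: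
    (L : Subring A)
    (hLcentral : ∀ x ∈ L, ∀ y : A, x * y = y * x)
    (hLsym : ∀ x ∈ L, σ x = x)
    (hLF : ∀ r : F, algebraMap F A r ∈ L)
    (hLfield : ∀ x ∈ L, x ≠ 0 → ∃ y ∈ L, x * y = 1) :
    -- then `P` extends to an ordering `Q` on `L`:
    ∃ Q : Set A, Q ⊆ (L : Set A) ∧
      (∀ a ∈ Q, ∀ b ∈ Q, a + b ∈ Q) ∧
      (∀ a ∈ Q, ∀ b ∈ Q, a * b ∈ Q) ∧
      (∀ x ∈ L, x ∈ Q ∨ -x ∈ Q) ∧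
      (∀ x, x ∈ Q → -x ∈ Q → x = 0) ∧
      (∀ r : F, algebraMap F A r ∈ Q ↔ r ∈ P) :=
  stmt_2_general σ P hP0 hPtot hPprop Pc hPcadd hPcconj hPcF hPcprop L hLcentral hLsym hLF hLfield
end

section
/- Let (A,σ) = (A₁,σ₁) × ⋯ × (A_r,σ_r) × (B₁,τ₁) × ⋯ × (B_s,τ_s) be a finite-dimensional semisimple F-algebra with involution, where each A_i is simple with F-linear involution σ_i, and each B_j = C_j × C_j^op with the exchange involution τ_j. If 𝒫 is a prepositive cone on (A,σ) over P ∈ X_F, then 𝒫 = 𝒫₁ × ⋯ × 𝒫_r × {0} × ⋯ × {0}, where each 𝒫_i is either a prepositive cone on (A_i,σ_i) over P or {0}, and at least one 𝒫_i is nonzero. -/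
/-- A prepositive cone on an `F`-algebra `B` with `F`-linear involution `τ`, over the
ordering `P` of `F` (conditions (P1)–(P5)). -/
def IsPrepositiveCone {F B : Type*} [Field F] [Ring B] [Algebra F B]
    (τ : B → B) (P : Set F) (S : Set B) : Prop :=
  (∀ b ∈ S, τ b = b) ∧
  (0 : B) ∈ S ∧
  (∀ a ∈ S, ∀ b ∈ S, a + b ∈ S) ∧
  (∀ x : B, ∀ a ∈ S, τ x * a * x ∈ S) ∧
  {u : F | ∀ a ∈ S, u • a ∈ S} = P ∧
  (∀ a ∈ S, -a ∈ S → a = 0)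

/-!
On an exchange factor `C × Cᵒᵖ` the element `ε = (1, -1)` satisfies `exch(ε) b ε = -b` for every
`b`, so conjugating by `ε` puts both `b` and `-b` into the cone: the exchange components of a
prepositive cone vanish. On the remaining factors, conjugating by the central symmetric idempotent
`e_i` shows that `e_i 𝒫 ⊆ 𝒫`, so `𝒫` is the sum of its components `𝒫_i`. A nonzero `𝒫_i` inherits
(P1)–(P5) from `𝒫`; its scalar set contains `P` and is proper, hence equals `P` because `P` is an
ordering. Finally `𝒫 ≠ {0}`, since every scalar preserves `{0}` while `P ≠ F`.
-/

open MulOpposite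

def exchangeInvolution {C : Type*} (b : C × Cᵐᵒᵖ) : C × Cᵐᵒᵖ := (b.2.unop, op b.1)

theorem exists_exchangeInvolution_conj_eq_neg {ι : Type*} (C : ι → Type*) [∀ j, Ring (C j)] :
    ∃ ε : ∀ j, C j × (C j)ᵐᵒᵖ, ∀ b, (fun j => exchangeInvolution (ε j)) * b * ε = -b :=
  ⟨fun j => (1, op (-1)), fun b => by funext j; ext <;> simp [exchangeInvolution]⟩

section Accessors

variable {F B : Type*} [Field F] [Ring B] [Algebra F B] {τ : B → B} {P : Set F} {S : Set B}

theorem IsPrepositiveCone.zero_mem (hS : IsPrepositiveCone τ P S) : (0 : B) ∈ S := hS.2.1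

theorem IsPrepositiveCone.add_mem (hS : IsPrepositiveCone τ P S) :
    ∀ a ∈ S, ∀ b ∈ S, a + b ∈ S := hS.2.2.1

theorem IsPrepositiveCone.conj_mem (hS : IsPrepositiveCone τ P S) :
    ∀ x : B, ∀ a ∈ S, τ x * a * x ∈ S := hS.2.2.2.1

theorem IsPrepositiveCone.eq_zero_of_neg_mem (hS : IsPrepositiveCone τ P S) :
    ∀ a ∈ S, -a ∈ S → a = 0 := hS.2.2.2.2.2

end Accessors

theorem IsPrepositiveCone.ne_singleton_zero {F B : Type*} [Field F] [Ring B] [Algebra F B]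
    {τ : B → B} {P : Set F} {S : Set B} (hS : IsPrepositiveCone τ P S)
    (hPprop : ∀ a : F, a ∈ P → -a ∈ P → a = 0) : S ≠ {0} := by
  rintro rfl
  have hscal : ∀ u : F, u ∈ P := fun u => hS.2.2.2.2.1 ▸ fun a ha => by
    rw [Set.mem_singleton_iff.mp ha, smul_zero]; rfl
  exact one_ne_zero (hPprop 1 (hscal 1) (hscal (-1)))

theorem mem_iff_fst_mem_image_of_snd_eq_zero {R₁ R₂ : Type*} [Zero R₂] {S : Set (R₁ × R₂)}
    (hsnd : ∀ a ∈ S, a.2 = 0) (a : R₁ × R₂) : a ∈ S ↔ a.1 ∈ Prod.fst '' S ∧ a.2 = 0 := by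
  refine ⟨fun ha => ⟨⟨a, ha, rfl⟩, hsnd a ha⟩, ?_⟩
  rintro ⟨⟨b, hb, hba⟩, ha2⟩
  rwa [← Prod.ext hba (ha2 ▸ hsnd b hb)]

section Prod

variable {R₁ R₂ : Type*} [Ring R₁] [Ring R₂] {τ₁ : R₁ → R₁} {τ₂ : R₂ → R₂}

theorem snd_eq_zero_of_conj_eq_neg {S : Set (R₁ × R₂)}
    (hconj : ∀ x, ∀ a ∈ S, Prod.map τ₁ τ₂ x * a * x ∈ S) (hprop : ∀ a ∈ S, -a ∈ S → a = 0)
    {ε : R₂} (hε : ∀ b, τ₂ ε * b * ε = -b) {a : R₁ × R₂} (ha : a ∈ S) : a.2 = 0 := by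
  have conj_neg : ∀ c ∈ S, ((0 : R₁), -c.2) ∈ S := fun c hc => by
    convert hconj (0, ε) c hc using 1
    exact Prod.ext (by simp) (by simp [hε])
  have hneg : -((0 : R₁), -a.2) ∈ S := by simpa using conj_neg _ (conj_neg a ha)
  simpa using congrArg Prod.snd (hprop _ (conj_neg a ha) hneg)

theorem IsPrepositiveCone.image_fst {F : Type*} [Field F] [Algebra F R₁] [Algebra F R₂]
    {P : Set F} {S : Set (R₁ × R₂)} (hS : IsPrepositiveCone (Prod.map τ₁ τ₂) P S)
    (hsnd : ∀ a ∈ S, a.2 = 0) : IsPrepositiveCone τ₁ P (Prod.fst '' S) := by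
  obtain ⟨hsym, h0, hadd, hconj, hscal, hprop⟩ := hS
  have hmem (x : R₁) : x ∈ Prod.fst '' S ↔ (x, (0 : R₂)) ∈ S := by
    simp [mem_iff_fst_mem_image_of_snd_eq_zero hsnd (x, 0)]
  refine ⟨?_, ⟨0, h0, rfl⟩, ?_, ?_, ?_, ?_⟩
  · rintro _ ⟨a, ha, rfl⟩
    exact congrArg Prod.fst (hsym a ha)
  · rintro _ ⟨a, ha, rfl⟩ _ ⟨b, hb, rfl⟩
    exact ⟨a + b, hadd a ha b hb, rfl⟩
  · rintro x _ ⟨a, ha, rfl⟩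
    exact ⟨_, hconj (x, 0) a ha, rfl⟩
  · rw [← hscal]
    ext u
    refine ⟨fun hu a ha => ?_, fun hu _ ⟨a, ha, hx⟩ => ⟨u • a, hu a ha, hx ▸ rfl⟩⟩
    have h := (hmem _).mp (hu a.1 ⟨a, ha, rfl⟩)
    rwa [← smul_zero u, ← Prod.smul_mk, ← hsnd a ha] at h
  · intro x hx hnx
    rw [hmem] at hx hnx
    simpa using congrArg Prod.fst (hprop _ hx (by simpa using hnx))

end Prod

section Pi

variable {ι : Type*} [DecidableEq ι] {A : ι → Type*} [∀ i, Ring (A i)] {σ : ∀ i, A i → A i}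

theorem conj_single (i : ι) (z : A i) (f : ∀ i, A i) :
    (fun j => σ j (Pi.single i z j)) * f * Pi.single i z = Pi.single i (σ i z * f i * z) := by
  funext j
  by_cases h : j = i
  · subst h; simp
  · simp [Pi.single_eq_of_ne h]

theorem mem_image_eval_iff {S : Set (∀ i, A i)}
    (hconj : ∀ x, ∀ f ∈ S, (fun j => σ j (x j)) * f * x ∈ S) (hσ1 : ∀ i, σ i 1 = 1)
    (i : ι) (x : A i) : x ∈ (fun f => f i) '' S ↔ Pi.single i x ∈ S := by
  refine ⟨?_, fun h => ⟨_, h, Pi.single_eq_same i x⟩⟩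
  rintro ⟨f, hf, rfl⟩
  simpa [conj_single, hσ1] using hconj (Pi.single i 1) f hf

theorem mem_iff_forall_mem_image_eval [Fintype ι] {S : Set (∀ i, A i)}
    (hconj : ∀ x, ∀ f ∈ S, (fun j => σ j (x j)) * f * x ∈ S) (hσ1 : ∀ i, σ i 1 = 1)
    (h0 : 0 ∈ S) (hadd : ∀ a ∈ S, ∀ b ∈ S, a + b ∈ S) (f : ∀ i, A i) :
    f ∈ S ↔ ∀ i, f i ∈ (fun f => f i) '' S := by
  refine ⟨fun hf i => ⟨f, hf, rfl⟩, fun h => ?_⟩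
  rw [← Finset.univ_sum_single f]
  exact Finset.sum_induction _ (· ∈ S) (fun a b ha hb => hadd a ha b hb) h0
    fun i _ => (mem_image_eval_iff hconj hσ1 i (f i)).mp (h i)

theorem IsPrepositiveCone.image_eval {F : Type*} [Field F] [∀ i, Algebra F (A i)]
    {P : Set F} {S : Set (∀ i, A i)} (hS : IsPrepositiveCone (fun f i => σ i (f i)) P S)
    (hσ1 : ∀ i, σ i 1 = 1) (hPtot : ∀ a : F, a ∈ P ∨ -a ∈ P) (i : ι)
    (hi : (fun f => f i) '' S ≠ {0}) :
    IsPrepositiveCone (σ i) P ((fun f => f i) '' S) := by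
  obtain ⟨hsym, h0, hadd, hconj, hscal, hprop⟩ := hS
  have hmem := mem_image_eval_iff hconj hσ1 i
  have hsmul : ∀ u ∈ P, ∀ x ∈ (fun f => f i) '' S, u • x ∈ (fun f => f i) '' S := by
    intro u hu x hx
    rw [hmem, Pi.single_smul]
    exact (hscal ▸ hu : u ∈ {u : F | ∀ a ∈ S, u • a ∈ S}) _ ((hmem x).mp hx)
  have hproper : ∀ x ∈ (fun f => f i) '' S, -x ∈ (fun f => f i) '' S → x = 0 := by
    intro x hx hnx
    rw [hmem] at hx hnx
    simpa using congrFun (hprop _ hx (by simpa [Pi.single_neg] using hnx)) i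
  have h0i : (0 : A i) ∈ (fun f => f i) '' S := ⟨0, h0, rfl⟩
  refine ⟨?_, h0i, ?_, ?_, ?_, hproper⟩
  · rintro _ ⟨f, hf, rfl⟩
    exact congrFun (hsym f hf) i
  · rintro _ ⟨f, hf, rfl⟩ _ ⟨g, hg, rfl⟩
    exact ⟨f + g, hadd f hf g hg, rfl⟩
  · rintro z _ ⟨f, hf, rfl⟩
    rw [hmem, ← conj_single]
    exact hconj _ f hf
  · refine Set.Subset.antisymm (fun u hu => ?_) hsmul
    have hP0 : (0 : F) ∈ P := hscal ▸ fun f _ => (zero_smul F f).symm ▸ h0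
    obtain ⟨x, hx, hx0⟩ := ((Set.nontrivial_iff_ne_singleton h0i).mpr hi).exists_ne 0
    by_contra hup
    have hnu := (hPtot u).resolve_left hup
    have hux : -((-u) • x) ∈ (fun f => f i) '' S := by simpa using hu x hx
    have := hproper _ (hsmul _ hnu x hx) hux
    rw [neg_smul, neg_eq_zero, smul_eq_zero] at this
    exact this.elim (fun hu0 => hup (hu0 ▸ hP0)) hx0

end Pi

theorem exists_image_eval_ne_singleton_zero {ι : Type*} {A : ι → Type*} [∀ i, Zero (A i)]
    {S : Set (∀ i, A i)} (h0 : 0 ∈ S) (hS : S ≠ {0}) : ∃ i, (fun f => f i) '' S ≠ {0} := by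
  by_contra! h
  refine hS (Set.Subset.antisymm (fun f hf => funext fun i => ?_) (by simpa using h0))
  have hfi : f i ∈ (fun f => f i) '' S := ⟨f, hf, rfl⟩
  rwa [h i] at hfi

theorem stmt_3_general
    {F : Type*} [Field F] {r s : ℕ}
    (A : Fin r → Type*) [∀ i, Ring (A i)] [∀ i, Algebra F (A i)]
    (σ : ∀ i, A i → A i)
    (hσmul : ∀ i, ∀ x y, σ i (x * y) = σ i y * σ i x)
    (hσinv : ∀ i, ∀ x, σ i (σ i x) = x)
    (C : Fin s → Type*) [∀ j, Ring (C j)] [∀ j, Algebra F (C j)]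
    -- `P` is an ordering on `F`:
    (P : Set F)
    (hPtot : ∀ a : F, a ∈ P ∨ -a ∈ P)
    (hPprop : ∀ a : F, a ∈ P → -a ∈ P → a = 0)
    -- the involution on the product algebra: `σ` on the `A i` and exchange on the `C j × (C j)ᵒᵖ`
    (Pc : Set ((∀ i, A i) × ∀ j, C j × (C j)ᵐᵒᵖ))
    (hPc : IsPrepositiveCone
      (fun a : (∀ i, A i) × ∀ j, C j × (C j)ᵐᵒᵖ => (fun i => σ i (a.1 i),
                 fun j => ((a.2 j).2.unop, MulOpposite.op (a.2 j).1)))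
      P Pc) :
    (∀ a ∈ Pc, a.2 = 0) ∧
    (∀ a : (∀ i, A i) × ∀ j, C j × (C j)ᵐᵒᵖ,
        a ∈ Pc ↔ ((∀ i, a.1 i ∈ (fun b : (∀ i, A i) × ∀ j, C j × (C j)ᵐᵒᵖ => b.1 i) '' Pc)
          ∧ a.2 = 0)) ∧
    (∀ i, ((fun b : (∀ i, A i) × ∀ j, C j × (C j)ᵐᵒᵖ => b.1 i) '' Pc = {0}) ∨
      IsPrepositiveCone (σ i) P
        ((fun b : (∀ i, A i) × ∀ j, C j × (C j)ᵐᵒᵖ => b.1 i) '' Pc)) ∧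
    (∃ i, (fun b : (∀ i, A i) × ∀ j, C j × (C j)ᵐᵒᵖ => b.1 i) '' Pc ≠ {0}) := by
  have hσ1 : ∀ i, σ i 1 = 1 := fun i => by
    simpa [hσinv] using (hσmul i (σ i 1) 1).symm
  obtain ⟨ε, hε⟩ := exists_exchangeInvolution_conj_eq_neg C
  have hsnd : ∀ a ∈ Pc, a.2 = 0 := fun a ha =>
    snd_eq_zero_of_conj_eq_neg (τ₁ := fun f i => σ i (f i))
      (τ₂ := fun g j => exchangeInvolution (g j)) hPc.conj_mem hPc.eq_zero_of_neg_mem hε ha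
  have hfst : IsPrepositiveCone (fun f i => σ i (f i)) P (Prod.fst '' Pc) :=
    IsPrepositiveCone.image_fst (τ₂ := fun (g : ∀ j, C j × (C j)ᵐᵒᵖ) j => exchangeInvolution (g j))
      hPc hsnd
  have hcomp : ∀ i, (fun b : (∀ i, A i) × ∀ j, C j × (C j)ᵐᵒᵖ => b.1 i) '' Pc =
      (fun f => f i) '' (Prod.fst '' Pc) := fun i =>
    (Set.image_image (fun f : ∀ i, A i => f i) Prod.fst Pc).symm
  simp only [hcomp]
  refine ⟨hsnd, fun a => ?_, fun i => (em _).imp_right (hfst.image_eval hσ1 hPtot i), ?_⟩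
  · rw [mem_iff_fst_mem_image_of_snd_eq_zero hsnd,
      mem_iff_forall_mem_image_eval hfst.conj_mem hσ1 hfst.zero_mem hfst.add_mem]
  · exact exists_image_eval_ne_singleton_zero hfst.zero_mem (hfst.ne_singleton_zero hPprop)

/-- Let `(A,σ) = (A₁,σ₁) × ⋯ × (A_r,σ_r) × (B₁,τ₁) × ⋯ × (B_s,τ_s)` be a
finite-dimensional semisimple `F`-algebra with involution, where each `A i` is simple with
`F`-linear involution `σ i`, and each `B j = C j × (C j)ᵒᵖ` carries the exchange involution.
If `Pc` is a prepositive cone on `(A,σ)` over `P`, then `Pc` is the product of its components: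
each component on a factor `A i` is either a prepositive cone over `P` or `{0}`, the components
on the exchange factors are `{0}`, and at least one component is nonzero. -/
theorem stmt_3
    {F : Type*} [Field F] {r s : ℕ}
    (A : Fin r → Type*) [∀ i, Ring (A i)] [∀ i, Algebra F (A i)]
    [∀ i, FiniteDimensional F (A i)] [∀ i, IsSimpleRing (A i)]
    (σ : ∀ i, A i → A i)
    (hσadd : ∀ i, ∀ x y, σ i (x + y) = σ i x + σ i y)
    (hσmul : ∀ i, ∀ x y, σ i (x * y) = σ i y * σ i x)
    (hσinv : ∀ i, ∀ x, σ i (σ i x) = x)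
    (hσlin : ∀ i, ∀ (c : F) (x : A i), σ i (c • x) = c • σ i x)
    (C : Fin s → Type*) [∀ j, Ring (C j)] [∀ j, Algebra F (C j)]
    [∀ j, FiniteDimensional F (C j)] [∀ j, IsSimpleRing (C j)]
    -- `P` is an ordering on `F`:
    (P : Set F)
    (hP0 : (0 : F) ∈ P)
    (hPadd : ∀ a ∈ P, ∀ b ∈ P, a + b ∈ P)
    (hPmul : ∀ a ∈ P, ∀ b ∈ P, a * b ∈ P)
    (hPtot : ∀ a : F, a ∈ P ∨ -a ∈ P)
    (hPprop : ∀ a : F, a ∈ P → -a ∈ P → a = 0)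
    -- the involution on the product algebra: `σ` on the `A i` and exchange on the `C j × (C j)ᵒᵖ`
    (Pc : Set ((∀ i, A i) × ∀ j, C j × (C j)ᵐᵒᵖ))
    (hPc : IsPrepositiveCone
      (fun a : (∀ i, A i) × ∀ j, C j × (C j)ᵐᵒᵖ => (fun i => σ i (a.1 i),
                 fun j => ((a.2 j).2.unop, MulOpposite.op (a.2 j).1)))
      P Pc) :
    (∀ a ∈ Pc, a.2 = 0) ∧
    (∀ a : (∀ i, A i) × ∀ j, C j × (C j)ᵐᵒᵖ,
        a ∈ Pc ↔ ((∀ i, a.1 i ∈ (fun b : (∀ i, A i) × ∀ j, C j × (C j)ᵐᵒᵖ => b.1 i) '' Pc)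
          ∧ a.2 = 0)) ∧
    (∀ i, ((fun b : (∀ i, A i) × ∀ j, C j × (C j)ᵐᵒᵖ => b.1 i) '' Pc = {0}) ∨
      IsPrepositiveCone (σ i) P
        ((fun b : (∀ i, A i) × ∀ j, C j × (C j)ᵐᵒᵖ => b.1 i) '' Pc)) ∧
    (∃ i, (fun b : (∀ i, A i) × ∀ j, C j × (C j)ᵐᵒᵖ => b.1 i) '' Pc ≠ {0}) :=
  stmt_3_general A σ hσmul hσinv C P hPtot hPprop Pc hPc
end

section
/- Let A be an F-algebra with F-linear involution σ, 𝒫 a prepositive cone on (A,σ) over P ∈ X_F with 1 ∈ 𝒫, and k a subfield of F. Define R_{k,𝒫} := {a ∈ A : ∃ m ∈ k ∩ P, σ(a)a ≤_𝒫 m} and I_{k,𝒫} := {a ∈ A : ∀ ε ∈ k^× ∩ P, σ(a)a ≤_𝒫 ε}. Then R_{k,𝒫} is a subring of A and I_{k,𝒫} is a two-sided ideal of R_{k,𝒫}. -/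
/-!
Write `a ≼ m` (`SqNormLE`) for `σ(a)a ≤_𝒫 m`. Everything follows from three estimates:
`a ≼ m` and `b ≼ n` give `-a ≼ m`, `ab ≼ mn` (by the identity
`mn - σ(ab)ab = m(n - σ(b)b) + σ(b)(m - σ(a)a)b`) and `a + b ≼ 2(m + n)` (by the parallelogram
law). Since bounds multiply, rescaling `ε` by an element of `k^× ∩ P` keeps the infinitesimal
elements closed under sums (rescale by `4`) and under multiplication by an `a ≼ m` (rescale by
`m + 1`). These rescalings are legitimate because an ordering is a preordering: `P⁻¹ ⊆ P` and
`-1 ∉ P`, so `m + 1 ≠ 0`.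
-/

theorem Function.Involutive.map_one_of_map_mul_rev {M : Type*} [MulOneClass M] {σ : M → M}
    (hinv : Function.Involutive σ) (hmul : ∀ x y, σ (x * y) = σ y * σ x) : σ 1 = 1 :=
  calc σ 1 = σ 1 * σ (σ 1) := by rw [hinv, mul_one]
    _ = σ (σ 1 * 1) := (hmul _ _).symm
    _ = 1 := by rw [mul_one, hinv]

def RingPreordering.ofOrdering {F : Type*} [Field F] (P : Set F)
    (hadd : ∀ a ∈ P, ∀ b ∈ P, a + b ∈ P) (hmul : ∀ a ∈ P, ∀ b ∈ P, a * b ∈ P)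
    (htot : ∀ a : F, a ∈ P ∨ -a ∈ P) (hprop : ∀ a : F, a ∈ P → -a ∈ P → a = 0) :
    RingPreordering F :=
  have hsq : ∀ x : F, x * x ∈ P := fun x =>
    (htot x).elim (fun h => hmul x h x h) fun h => by simpa using hmul _ h _ h
  .mk' P (hadd _ · _ ·) (hmul _ · _ ·) hsq fun h =>
    one_ne_zero (hprop 1 (by simpa using hsq 1) (by simpa using h))

theorem RingPreordering.add_one_ne_zero {R : Type*} [CommRing R] {O : RingPreordering R} {m : R}
    (hm : m ∈ O) : m + 1 ≠ 0 := fun h =>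
  O.neg_one_notMem (by rwa [← eq_neg_of_add_eq_zero_left h])

section SqNormLE

variable {F A : Type*} [Field F] [Ring A] [Algebra F A] {σ : A →+ A} {C : AddSubmonoid A}
  {O : RingPreordering F} {a b : A} {m n : F}

def SqNormLE (σ : A →+ A) (C : AddSubmonoid A) (a : A) (m : F) : Prop :=
  algebraMap F A m - σ a * a ∈ C

theorem sqNormLE_one (hσ1 : σ 1 = 1) : SqNormLE σ C 1 (1 : F) := by
  simp [SqNormLE, hσ1]

theorem sqNormLE_zero (hsmul : ∀ u ∈ O, ∀ x ∈ C, u • x ∈ C) (hone : 1 ∈ C) (hm : m ∈ O) :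
    SqNormLE σ C 0 m := by
  simpa [SqNormLE, Algebra.algebraMap_eq_smul_one] using hsmul m hm 1 hone

theorem SqNormLE.neg (h : SqNormLE σ C a m) : SqNormLE σ C (-a) m := by
  simpa [SqNormLE] using h

theorem SqNormLE.add_one (hone : 1 ∈ C) (h : SqNormLE σ C a m) : SqNormLE σ C a (m + 1) := by
  convert C.add_mem h hone using 1
  rw [SqNormLE, map_add, map_one, add_sub_right_comm]

theorem SqNormLE.add (hconj : ∀ x, ∀ y ∈ C, σ x * y * x ∈ C) (hone : 1 ∈ C)
    (ha : SqNormLE σ C a m) (hb : SqNormLE σ C b n) : SqNormLE σ C (a + b) (2 * (m + n)) := by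
  have hdiff : σ (a - b) * (a - b) ∈ C := by simpa using hconj (a - b) 1 hone
  convert C.add_mem (C.add_mem (C.add_mem ha hb) (C.add_mem ha hb)) hdiff using 1
  simp only [SqNormLE, map_add, map_sub, map_mul, map_ofNat]
  noncomm_ring

theorem SqNormLE.mul (hσmul : ∀ x y, σ (x * y) = σ y * σ x)
    (hconj : ∀ x, ∀ y ∈ C, σ x * y * x ∈ C) (hsmul : ∀ u ∈ O, ∀ x ∈ C, u • x ∈ C) (hm : m ∈ O)
    (ha : SqNormLE σ C a m) (hb : SqNormLE σ C b n) : SqNormLE σ C (a * b) (m * n) := by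
  convert C.add_mem (hsmul m hm _ hb) (hconj b _ ha) using 1
  rw [SqNormLE, hσmul, Algebra.smul_def, map_mul, mul_sub, mul_sub, sub_mul,
    ← Algebra.commutes m (σ b)]
  noncomm_ring

variable (σ C O) (k : Subfield F)

def boundedElements : Set A :=
  {a | ∃ m : F, m ∈ k ∧ m ∈ O ∧ SqNormLE σ C a m}

def infinitesimalElements : Set A :=
  {a | ∀ ε : F, ε ∈ k → ε ∈ O → ε ≠ 0 → SqNormLE σ C a ε}

variable {σ C O k}

theorem one_mem_boundedElements (hσ1 : σ 1 = 1) : 1 ∈ boundedElements σ C O k :=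
  ⟨1, k.one_mem, O.one_mem, sqNormLE_one hσ1⟩

theorem add_mem_boundedElements (hconj : ∀ x, ∀ y ∈ C, σ x * y * x ∈ C) (hone : 1 ∈ C)
    (ha : a ∈ boundedElements σ C O k) (hb : b ∈ boundedElements σ C O k) :
    a + b ∈ boundedElements σ C O k :=
  let ⟨m, hmk, hmO, ha⟩ := ha
  let ⟨n, hnk, hnO, hb⟩ := hb
  ⟨2 * (m + n), mul_mem (ofNat_mem k 2) (add_mem hmk hnk),
    mul_mem (ofNat_mem O 2) (add_mem hmO hnO), ha.add hconj hone hb⟩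

theorem neg_mem_boundedElements (ha : a ∈ boundedElements σ C O k) :
    -a ∈ boundedElements σ C O k :=
  let ⟨m, hmk, hmO, ha⟩ := ha
  ⟨m, hmk, hmO, ha.neg⟩

theorem mul_mem_boundedElements (hσmul : ∀ x y, σ (x * y) = σ y * σ x)
    (hconj : ∀ x, ∀ y ∈ C, σ x * y * x ∈ C) (hsmul : ∀ u ∈ O, ∀ x ∈ C, u • x ∈ C)
    (ha : a ∈ boundedElements σ C O k) (hb : b ∈ boundedElements σ C O k) :
    a * b ∈ boundedElements σ C O k :=
  let ⟨m, hmk, hmO, ha⟩ := ha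
  let ⟨n, hnk, hnO, hb⟩ := hb
  ⟨m * n, mul_mem hmk hnk, mul_mem hmO hnO, ha.mul hσmul hconj hsmul hmO hb⟩

theorem infinitesimalElements_subset_boundedElements :
    infinitesimalElements σ C O k ⊆ boundedElements σ C O k := fun _ ha =>
  ⟨1, k.one_mem, O.one_mem, ha 1 k.one_mem O.one_mem one_ne_zero⟩

theorem zero_mem_infinitesimalElements (hsmul : ∀ u ∈ O, ∀ x ∈ C, u • x ∈ C) (hone : 1 ∈ C) :
    0 ∈ infinitesimalElements σ C O k := fun _ _ hεO _ =>
  sqNormLE_zero hsmul hone hεO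

theorem neg_mem_infinitesimalElements (ha : a ∈ infinitesimalElements σ C O k) :
    -a ∈ infinitesimalElements σ C O k := fun ε hεk hεO hε =>
  (ha ε hεk hεO hε).neg

theorem mem_infinitesimalElements_of_forall_sqNormLE_mul {c : F} (hck : c ∈ k) (hcO : c ∈ O)
    (hc : c ≠ 0) (h : ∀ δ : F, δ ∈ k → δ ∈ O → δ ≠ 0 → SqNormLE σ C a (c * δ)) :
    a ∈ infinitesimalElements σ C O k := fun ε hεk hεO hε => by
  have hδO : ε / c ∈ O := by
    rw [div_eq_mul_inv]
    exact mul_mem hεO (RingPreordering.inv_mem hcO)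
  simpa only [mul_div_cancel₀ ε hc] using h (ε / c) (div_mem hεk hck) hδO (div_ne_zero hε hc)

theorem add_mem_infinitesimalElements (hconj : ∀ x, ∀ y ∈ C, σ x * y * x ∈ C) (hone : 1 ∈ C)
    (ha : a ∈ infinitesimalElements σ C O k) (hb : b ∈ infinitesimalElements σ C O k) :
    a + b ∈ infinitesimalElements σ C O k := by
  have h4 : (4 : F) ≠ 0 := fun h =>
    RingPreordering.add_one_ne_zero (ofNat_mem O 3) (by linear_combination h)
  refine mem_infinitesimalElements_of_forall_sqNormLE_mul (ofNat_mem k 4) (ofNat_mem O 4) h4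
    fun δ hδk hδO hδ => ?_
  have := (ha δ hδk hδO hδ).add hconj hone (hb δ hδk hδO hδ)
  rwa [show 2 * (δ + δ) = 4 * δ by ring] at this

theorem mul_mem_infinitesimalElements (hσmul : ∀ x y, σ (x * y) = σ y * σ x)
    (hconj : ∀ x, ∀ y ∈ C, σ x * y * x ∈ C) (hsmul : ∀ u ∈ O, ∀ x ∈ C, u • x ∈ C) (hone : 1 ∈ C)
    (ha : a ∈ boundedElements σ C O k) (hb : b ∈ infinitesimalElements σ C O k) :
    a * b ∈ infinitesimalElements σ C O k ∧ b * a ∈ infinitesimalElements σ C O k := by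
  obtain ⟨m, hmk, hmO, ha⟩ := ha
  have hmO' : m + 1 ∈ O := add_mem hmO O.one_mem
  have ha' := ha.add_one hone
  constructor <;> refine mem_infinitesimalElements_of_forall_sqNormLE_mul
    (add_mem hmk k.one_mem) hmO' (RingPreordering.add_one_ne_zero hmO) fun δ hδk hδO hδ => ?_
  · exact ha'.mul hσmul hconj hsmul hmO' (hb δ hδk hδO hδ)
  · rw [mul_comm]
    exact (hb δ hδk hδO hδ).mul hσmul hconj hsmul hδO ha'

end SqNormLE

theorem stmt_5_general
    {F A : Type*} [Field F] [Ring A] [Algebra F A]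
    (σ : A → A)
    (hσadd : ∀ x y, σ (x + y) = σ x + σ y)
    (hσmul : ∀ x y, σ (x * y) = σ y * σ x)
    (hσinv : ∀ x, σ (σ x) = x)
    -- `P` is an ordering on `F`:
    (P : Set F)
    (hPadd : ∀ a ∈ P, ∀ b ∈ P, a + b ∈ P)
    (hPmul : ∀ a ∈ P, ∀ b ∈ P, a * b ∈ P)
    (hPtot : ∀ a : F, a ∈ P ∨ -a ∈ P)
    (hPprop : ∀ a : F, a ∈ P → -a ∈ P → a = 0)
    -- `Pc` is a prepositive cone on `(A,σ)` over `P` with `1 ∈ Pc`: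
    (Pc : Set A)
    (hPc0 : (0 : A) ∈ Pc)
    (hPcadd : ∀ a ∈ Pc, ∀ b ∈ Pc, a + b ∈ Pc)
    (hPcconj : ∀ (x : A), ∀ a ∈ Pc, σ x * a * x ∈ Pc)
    (hPcF : {u : F | ∀ a ∈ Pc, u • a ∈ Pc} = P)
    (hone : (1 : A) ∈ Pc)
    -- `k` is a subfield of `F`:
    (k : Subfield F)
    -- the ring `R_{k,Pc}` and the set `I_{k,Pc}`:
    (R I : Set A)
    (hR : R = {a : A | ∃ m : F, m ∈ k ∧ m ∈ P ∧ algebraMap F A m - σ a * a ∈ Pc})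
    (hI : I = {a : A | ∀ ε : F, ε ∈ k → ε ∈ P → ε ≠ 0 →
      algebraMap F A ε - σ a * a ∈ Pc}) :
    -- `R` is a subring of `A`:
    ((1 : A) ∈ R ∧ (∀ a ∈ R, ∀ b ∈ R, a + b ∈ R) ∧ (∀ a ∈ R, -a ∈ R) ∧
      (∀ a ∈ R, ∀ b ∈ R, a * b ∈ R)) ∧
    -- and `I` is a two-sided ideal of `R`:
    (I ⊆ R ∧ (0 : A) ∈ I ∧ (∀ a ∈ I, ∀ b ∈ I, a + b ∈ I) ∧ (∀ a ∈ I, -a ∈ I) ∧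
      (∀ a ∈ R, ∀ b ∈ I, a * b ∈ I ∧ b * a ∈ I)) := by
  let O := RingPreordering.ofOrdering P hPadd hPmul hPtot hPprop
  let C : AddSubmonoid A := ⟨⟨Pc, fun ha hb => hPcadd _ ha _ hb⟩, hPc0⟩
  let τ : A →+ A := .mk' σ hσadd
  have hτ1 : τ 1 = 1 := Function.Involutive.map_one_of_map_mul_rev hσinv hσmul
  have hsmul : ∀ u ∈ O, ∀ x ∈ C, u • x ∈ C := hPcF.ge
  have hR' : R = boundedElements τ C O k := hR
  have hI' : I = infinitesimalElements τ C O k := hI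
  subst hR' hI'
  exact ⟨⟨one_mem_boundedElements hτ1, fun _ ha _ hb => add_mem_boundedElements hPcconj hone ha hb,
    fun _ ha => neg_mem_boundedElements ha,
    fun _ ha _ hb => mul_mem_boundedElements hσmul hPcconj hsmul ha hb⟩,
    infinitesimalElements_subset_boundedElements, zero_mem_infinitesimalElements hsmul hone,
    fun _ ha _ hb => add_mem_infinitesimalElements hPcconj hone ha hb,
    fun _ ha => neg_mem_infinitesimalElements ha,
    fun _ ha _ hb => mul_mem_infinitesimalElements hσmul hPcconj hsmul hone ha hb⟩

/-- Let `A` be an `F`-algebra with `F`-linear involution `σ`, `Pc` a prepositive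
cone on `(A,σ)` over `P` with `1 ∈ Pc`, and `k` a subfield of `F`.  With
`R = {a : ∃ m ∈ k ∩ P, σ(a)a ≤_Pc m}` and `I = {a : ∀ ε ∈ k^× ∩ P, σ(a)a ≤_Pc ε}`,
`R` is a subring of `A` and `I` is a two-sided ideal of `R`. -/
theorem stmt_5
    {F A : Type*} [Field F] [Ring A] [Algebra F A]
    (σ : A → A)
    (hσadd : ∀ x y, σ (x + y) = σ x + σ y)
    (hσmul : ∀ x y, σ (x * y) = σ y * σ x)
    (hσinv : ∀ x, σ (σ x) = x)
    (hσlin : ∀ (r : F) (x : A), σ (r • x) = r • σ x)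
    -- `P` is an ordering on `F`:
    (P : Set F)
    (hP0 : (0 : F) ∈ P)
    (hPadd : ∀ a ∈ P, ∀ b ∈ P, a + b ∈ P)
    (hPmul : ∀ a ∈ P, ∀ b ∈ P, a * b ∈ P)
    (hPtot : ∀ a : F, a ∈ P ∨ -a ∈ P)
    (hPprop : ∀ a : F, a ∈ P → -a ∈ P → a = 0)
    -- `Pc` is a prepositive cone on `(A,σ)` over `P` with `1 ∈ Pc`:
    (Pc : Set A)
    (hPcsym : ∀ a ∈ Pc, σ a = a)
    (hPc0 : (0 : A) ∈ Pc)
    (hPcadd : ∀ a ∈ Pc, ∀ b ∈ Pc, a + b ∈ Pc)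
    (hPcconj : ∀ (x : A), ∀ a ∈ Pc, σ x * a * x ∈ Pc)
    (hPcF : {u : F | ∀ a ∈ Pc, u • a ∈ Pc} = P)
    (hPcprop : ∀ a ∈ Pc, -a ∈ Pc → a = 0)
    (hone : (1 : A) ∈ Pc)
    -- `k` is a subfield of `F`:
    (k : Subfield F)
    -- the ring `R_{k,Pc}` and the set `I_{k,Pc}`:
    (R I : Set A)
    (hR : R = {a : A | ∃ m : F, m ∈ k ∧ m ∈ P ∧ algebraMap F A m - σ a * a ∈ Pc})
    (hI : I = {a : A | ∀ ε : F, ε ∈ k → ε ∈ P → ε ≠ 0 →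
      algebraMap F A ε - σ a * a ∈ Pc}) :
    -- `R` is a subring of `A`:
    ((1 : A) ∈ R ∧ (∀ a ∈ R, ∀ b ∈ R, a + b ∈ R) ∧ (∀ a ∈ R, -a ∈ R) ∧
      (∀ a ∈ R, ∀ b ∈ R, a * b ∈ R)) ∧
    -- and `I` is a two-sided ideal of `R`:
    (I ⊆ R ∧ (0 : A) ∈ I ∧ (∀ a ∈ I, ∀ b ∈ I, a + b ∈ I) ∧ (∀ a ∈ I, -a ∈ I) ∧
      (∀ a ∈ R, ∀ b ∈ I, a * b ∈ I ∧ b * a ∈ I)) :=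
  stmt_5_general σ hσadd hσmul hσinv P hPadd hPmul hPtot hPprop Pc hPc0 hPcadd hPcconj hPcF hone k R
    I hR hI
end

section
/- Let (A,σ) be an F-algebra with involution, w a σ-invariant v-gauge on A, and 𝒫 a positive cone on (A,σ) over P ∈ X_F with 1 ∈ 𝒫. If condition (C5) holds — namely π_w(𝒫 ∩ R_w) is a prepositive cone on the residue algebra (A₀, σ₀) — then condition (C4) holds: I_w is 𝒫-convex in R_w, i.e., for all a ∈ R_w and b ∈ I_w with 0 ≤_𝒫 a ≤_𝒫 b, we have a ∈ I_w. -/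
/-- An ordering on a field (containing `0` by convention). -/
def IsOrderingSet {F : Type*} [Field F] (P : Set F) : Prop :=
  (0 : F) ∈ P ∧ (∀ a ∈ P, ∀ b ∈ P, a + b ∈ P) ∧ (∀ a ∈ P, ∀ b ∈ P, a * b ∈ P) ∧
  (∀ a : F, a ∈ P ∨ -a ∈ P) ∧ (∀ a : F, a ∈ P → -a ∈ P → a = 0)

section Valuation

variable {Γ : Type*} [AddCommGroup Γ] [LinearOrder Γ] [IsOrderedAddMonoid Γ]

theorem map_one_eq_zero_of_map_mul {R : Type*} [MulOneClass R] {v : R → WithTop Γ}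
    (hv1 : v 1 ≠ ⊤) (hvmul : ∀ x y, v (x * y) = v x + v y) : v 1 = 0 := by
  have h := hvmul 1 1
  rw [one_mul] at h
  lift v 1 to Γ using hv1 with γ
  norm_cast at h ⊢
  simpa using h

theorem map_neg_one_eq_zero_of_map_mul {R : Type*} [Ring R] {v : R → WithTop Γ}
    (hv1 : v 1 ≠ ⊤) (hvmul : ∀ x y, v (x * y) = v x + v y) : v (-1) = 0 := by
  have h := hvmul (-1) (-1)
  rw [neg_one_mul, neg_neg, map_one_eq_zero_of_map_mul hv1 hvmul] at h
  have hneg1 : v (-1) ≠ ⊤ := by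
    intro htop
    simp [htop] at h
  lift v (-1) to Γ using hneg1 with γ
  norm_cast at h ⊢
  -- a linearly ordered group is torsion-free
  rcases lt_trichotomy γ 0 with hlt | rfl | hgt
  · exact absurd h (add_neg hlt hlt).ne
  · rfl
  · exact absurd h (add_pos hgt hgt).ne'

end Valuation

section ValueFunction

variable {Γ₀ : Type*}

theorem map_neg_of_map_smul {F A : Type*} [Ring F] [AddCommGroup A] [Module F A]
    [AddZeroClass Γ₀] {v : F → Γ₀} {w : A → Γ₀} (hv : v (-1) = 0)
    (hwsmul : ∀ (r : F) (x : A), w (r • x) = v r + w x) (x : A) : w (-x) = w x := by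
  rw [← neg_one_smul F x, hwsmul, hv, zero_add]

variable [LinearOrder Γ₀] {A : Type*} [AddCommGroup A] {w : A → Γ₀}

theorem min_le_map_sub (hwneg : ∀ x, w (-x) = w x)
    (hwadd : ∀ x y, min (w x) (w y) ≤ w (x + y)) (x y : A) : min (w x) (w y) ≤ w (x - y) := by
  simpa only [hwneg, ← sub_eq_add_neg] using hwadd x (-y)

theorem pos_of_sub_mem_of_sub_mem [Zero Γ₀] (hwneg : ∀ x, w (-x) = w x)
    (hwadd : ∀ x y, min (w x) (w y) ≤ w (x + y)) {Pc : Set A}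
    (hprop : ∀ a, a ∈ Pc → 0 ≤ w a → ∀ b, b ∈ Pc → 0 ≤ w b → 0 < w (a + b) → 0 < w a)
    {s₁ s₂ t : A} (hs₁ : 0 < w s₁) (hs₂ : 0 < w s₂) (ht : 0 ≤ w t)
    (h₁ : t - s₁ ∈ Pc) (h₂ : s₂ - t ∈ Pc) : 0 < w t := by
  have hsub := min_le_map_sub hwneg hwadd
  have ha : 0 ≤ w (t - s₁) := (le_min ht hs₁.le).trans (hsub t s₁)
  have hb : 0 ≤ w (s₂ - t) := (le_min hs₂.le ht).trans (hsub s₂ t)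
  have hab : 0 < w ((t - s₁) + (s₂ - t)) := by
    rw [sub_add_sub_cancel']
    exact (lt_min hs₂ hs₁).trans_le (hsub s₂ s₁)
  have ha_pos : 0 < w (t - s₁) := hprop _ h₁ ha _ h₂ hb hab
  simpa only [sub_add_cancel] using (lt_min ha_pos hs₁).trans_le (hwadd (t - s₁) s₁)

end ValueFunction

theorem stmt_10_general
    {F A : Type*} [Field F] [Ring A] [Algebra F A]
    {Γ : Type*} [AddCommGroup Γ] [LinearOrder Γ] [IsOrderedAddMonoid Γ]
    -- `v` is a valuation on `F`:
    (v : F → WithTop Γ)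
    (hv0 : ∀ x, v x = ⊤ ↔ x = 0)
    (hvmul : ∀ x y, v (x * y) = v x + v y)
    -- `w` is a surmultiplicative `v`-value function on `A`:
    (w : A → WithTop Γ)
    (hwadd : ∀ x y, min (w x) (w y) ≤ w (x + y))
    (hwsmul : ∀ (r : F) (x : A), w (r • x) = v r + w x)
    (Pc : Set A)
    -- (C5): `π_w(Pc ∩ R_w)` is a prepositive cone on `(A₀, σ₀)`, on representatives:
    -- (P5) properness:
    (hC5prop : ∀ a, a ∈ Pc → 0 ≤ w a → ∀ b, b ∈ Pc → 0 ≤ w b →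
      0 < w (a + b) → 0 < w a) :
    -- then (C4): `I_w` is `Pc`-convex in `R_w`:
    ∀ s₁ s₂ t : A, 0 < w s₁ → 0 < w s₂ → 0 ≤ w t →
      t - s₁ ∈ Pc → s₂ - t ∈ Pc → 0 < w t := by
  intro s₁ s₂ t hs₁ hs₂ ht h₁ h₂
  have hv1 : v 1 ≠ ⊤ := fun h => one_ne_zero ((hv0 1).1 h)
  have hwneg := map_neg_of_map_smul (map_neg_one_eq_zero_of_map_mul hv1 hvmul) hwsmul
  exact pos_of_sub_mem_of_sub_mem hwneg hwadd hC5prop hs₁ hs₂ ht h₁ h₂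

/-- Let `(A,σ)` be an `F`-algebra with involution, `w` a `σ`-invariant
`v`-gauge on `A`, and `Pc` a positive cone on `(A,σ)` over `P` with `1 ∈ Pc`.  If condition
(C5) holds — `π_w(Pc ∩ R_w)` is a prepositive cone on the residue algebra `(A₀,σ₀)`, encoded
here on representatives, with `R_w = {a : w a ≥ 0}`, `I_w = {a : w a > 0}` and `π_w x = π_w y`
iff `w (x - y) > 0` — then (C4) holds: `I_w` is `Pc`-convex in `R_w`. -/
theorem stmt_10
    {F A : Type*} [Field F] [Ring A] [Algebra F A]
    {Γ : Type*} [AddCommGroup Γ] [LinearOrder Γ] [IsOrderedAddMonoid Γ]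
    (σ : A → A)
    (hσadd : ∀ x y, σ (x + y) = σ x + σ y)
    (hσmul : ∀ x y, σ (x * y) = σ y * σ x)
    (hσinv : ∀ x, σ (σ x) = x)
    (hσlin : ∀ (r : F) (x : A), σ (r • x) = r • σ x)
    -- `v` is a valuation on `F`:
    (v : F → WithTop Γ)
    (hv0 : ∀ x, v x = ⊤ ↔ x = 0)
    (hvmul : ∀ x y, v (x * y) = v x + v y)
    (hvadd : ∀ x y, min (v x) (v y) ≤ v (x + y))
    -- `w` is a surmultiplicative `v`-value function on `A`:
    (w : A → WithTop Γ)
    (hw0 : ∀ x, w x = ⊤ ↔ x = 0)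
    (hwadd : ∀ x y, min (w x) (w y) ≤ w (x + y))
    (hwsmul : ∀ (r : F) (x : A), w (r • x) = v r + w x)
    (hwone : w 1 = 0)
    (hwmul : ∀ x y, w x + w y ≤ w (x * y))
    -- `w` is `σ`-invariant:
    (hwσ : ∀ x, w (σ x) = w x)
    -- `w` is a `v`-norm (it admits a splitting basis):
    (hwnorm : ∃ (m : ℕ) (e : Fin m → A),
      (∀ a : A, ∃ lam : Fin m → F, a = ∑ i, lam i • e i) ∧
      (∀ lam : Fin m → F,
        w (∑ i, lam i • e i) = Finset.univ.inf fun i => v (lam i) + w (e i)))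
    -- the associated graded ring `gr_w(A)` is semisimple (no nonzero homogeneous nilpotent
    -- two-sided ideal, encoded componentwise):
    (hgrss : ∀ I : Γ → AddSubgroup A,
      (∀ γ : Γ, ∀ x ∈ I γ, (↑γ : WithTop Γ) ≤ w x) →
      (∀ γ : Γ, ∀ x : A, (↑γ : WithTop Γ) < w x → x ∈ I γ) →
      (∀ (α β : Γ) (x y : A), (↑α : WithTop Γ) ≤ w x → y ∈ I β →
        x * y ∈ I (α + β) ∧ y * x ∈ I (β + α)) →
      (∃ m : ℕ, 0 < m ∧ ∀ (γ : Fin m → Γ) (y : Fin m → A),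
        (∀ i, y i ∈ I (γ i)) → ((∑ i, γ i : Γ) : WithTop Γ) < w (List.ofFn y).prod) →
      ∀ γ : Γ, ∀ x ∈ I γ, (↑γ : WithTop Γ) < w x)
    -- `P` is an ordering on `F` and `Pc` a positive cone on `(A,σ)` over `P` with `1 ∈ Pc`:
    (P : Set F) (hP : IsOrderingSet P)
    (Pc : Set A) (hPc : IsPrepositiveCone σ P Pc)
    (hPcmax : ∀ Q : Set A, Pc ⊆ Q →
      (∃ P' : Set F, IsOrderingSet P' ∧ IsPrepositiveCone σ P' Q) → Q = Pc)
    (hone : (1 : A) ∈ Pc)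
    -- (C5): `π_w(Pc ∩ R_w)` is a prepositive cone on `(A₀, σ₀)`, on representatives:
    -- (P2) closed under sums:
    (hC5add : ∀ a, a ∈ Pc → 0 ≤ w a → ∀ b, b ∈ Pc → 0 ≤ w b →
      ∃ c, c ∈ Pc ∧ 0 ≤ w c ∧ 0 < w (a + b - c))
    -- (P3) closed under `ξ ↦ σ₀(ξ) · ξ`-congruence:
    (hC5conj : ∀ x : A, 0 ≤ w x → ∀ a, a ∈ Pc → 0 ≤ w a →
      ∃ c, c ∈ Pc ∧ 0 ≤ w c ∧ 0 < w (σ x * a * x - c))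
    -- (P4) the associated subset of the residue field is an ordering; here
    -- `Q := {u ∈ R_v : π_v(u)` multiplies `π_w(Pc ∩ R_w)` into itself`}`:
    (hC5ord : ∀ Q : Set F, Q = {u : F | 0 ≤ v u ∧ ∀ a, a ∈ Pc → 0 ≤ w a →
        ∃ c, c ∈ Pc ∧ 0 ≤ w c ∧ 0 < w (algebraMap F A u * a - c)} →
      (∀ u ∈ Q, ∀ u' ∈ Q, u + u' ∈ Q) ∧
      (∀ u ∈ Q, ∀ u' ∈ Q, u * u' ∈ Q) ∧
      (∀ u : F, 0 ≤ v u → u ∈ Q ∨ -u ∈ Q) ∧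
      (∀ u : F, u ∈ Q → -u ∈ Q → 0 < v u))
    -- (P5) properness:
    (hC5prop : ∀ a, a ∈ Pc → 0 ≤ w a → ∀ b, b ∈ Pc → 0 ≤ w b →
      0 < w (a + b) → 0 < w a) :
    -- then (C4): `I_w` is `Pc`-convex in `R_w`:
    ∀ s₁ s₂ t : A, 0 < w s₁ → 0 < w s₂ → 0 ≤ w t →
      t - s₁ ∈ Pc → s₂ - t ∈ Pc → 0 < w t :=
  stmt_10_general v hv0 hvmul w hwadd hwsmul Pc hC5prop
end

section
/- Let R be a semisimple ring with involution τ, M a right R-module, and h: M × M → R a nonsingular hermitian form over (R,τ) with adjoint involution ad_h on End_R(M). Then h is anisotropic (h(x,x) = 0 implies x = 0) if and only if ad_h is anisotropic (ad_h(f)∘f = 0 implies f = 0). -/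
/-! If `h` is anisotropic and `ad_h(f) ∘ f = 0`, then `h(f y, f y) = h(ad_h(f)(f y), y) = 0`, so
`f = 0`. Conversely, if `h(x, x) = 0` with `x ≠ 0`, the line `xR` is totally isotropic. It is a
direct summand because `Rᵐᵒᵖ` is semisimple along with `R` (Wedderburn–Artin), and a projection
`f` onto it satisfies `h(ad_h(f)(y), z) = h(f y, f z) = 0` for all `z`, so `ad_h(f) ∘ f = 0` by
nonsingularity while `f x = x ≠ 0`. -/

theorem Submodule.exists_isProj {S M : Type*} [Ring S] [AddCommGroup M] [Module S M]
    [ComplementedLattice (Submodule S M)] (p : Submodule S M) :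
    ∃ f : M →ₗ[S] M, LinearMap.IsProj p f := by
  obtain ⟨q, hpq⟩ := ComplementedLattice.exists_isCompl p
  exact ⟨p.projection q hpq, projection_apply_mem hpq, fun _ => projection_apply_of_mem_left hpq⟩

section Form

variable {R M : Type*} [Ring R] [AddCommGroup M] [Module Rᵐᵒᵖ M] {h : M → M → R}

theorem form_span_singleton_eq_zero {τ : R → R}
    (hsml : ∀ (r : R) (x y : M), h ((MulOpposite.op r) • x) y = τ r * h x y)
    (hsmr : ∀ (r : R) (x y : M), h x ((MulOpposite.op r) • y) = h x y * r)
    {x : M} (hx : h x x = 0) {a b : M}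
    (ha : a ∈ Submodule.span Rᵐᵒᵖ {x}) (hb : b ∈ Submodule.span Rᵐᵒᵖ {x}) : h a b = 0 := by
  obtain ⟨r, rfl⟩ := Submodule.mem_span_singleton.mp ha
  obtain ⟨s, rfl⟩ := Submodule.mem_span_singleton.mp hb
  rw [← MulOpposite.op_unop r, ← MulOpposite.op_unop s, hsml, hsmr, hx, zero_mul, mul_zero]

theorem adjoint_comp_eq_zero_of_isProj (hinj : ∀ x : M, (∀ y, h x y = 0) → x = 0)
    {adh : (M →ₗ[Rᵐᵒᵖ] M) → (M →ₗ[Rᵐᵒᵖ] M)}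
    (hadh : ∀ (f : M →ₗ[Rᵐᵒᵖ] M) (x y : M), h (adh f x) y = h x (f y))
    {p : Submodule Rᵐᵒᵖ M} (hp : ∀ a ∈ p, ∀ b ∈ p, h a b = 0)
    {f : M →ₗ[Rᵐᵒᵖ] M} (hf : LinearMap.IsProj p f) : adh f ∘ₗ f = 0 := by
  ext y
  exact hinj _ fun z => (hadh f (f y) z).trans (hp _ (hf.map_mem y) _ (hf.map_mem z))

end Form

theorem stmt_12_general
    {R M : Type*} [Ring R] [IsSemisimpleRing R]
    [AddCommGroup M] [Module Rᵐᵒᵖ M]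
    -- `τ` is an involution on `R`:
    (τ : R → R)
    -- `h` is a hermitian form over `(R,τ)`:
    (h : M → M → R)
    (haddl : ∀ x y z, h (x + y) z = h x z + h y z)
    (hsml : ∀ (r : R) (x y : M), h ((MulOpposite.op r) • x) y = τ r * h x y)
    (hsmr : ∀ (r : R) (x y : M), h x ((MulOpposite.op r) • y) = h x y * r)
    -- `h` is nonsingular: the induced map `M → Hom_R(M,R)` is bijective:
    (hinj : ∀ x : M, (∀ y, h x y = 0) → x = 0)
    -- `ad_h` is the adjoint involution on `End_R(M)`:
    (adh : (M →ₗ[Rᵐᵒᵖ] M) → (M →ₗ[Rᵐᵒᵖ] M))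
    (hadh : ∀ (f : M →ₗ[Rᵐᵒᵖ] M) (x y : M), h (adh f x) y = h x (f y)) :
    (∀ x : M, h x x = 0 → x = 0) ↔
      (∀ f : M →ₗ[Rᵐᵒᵖ] M, (adh f) ∘ₗ f = 0 → f = 0) := by
  constructor
  · intro han f hf
    have hzero : ∀ z, h 0 z = 0 := fun z => (AddMonoidHom.mk' (h · z) (haddl · · z)).map_zero
    ext y
    exact han _ (by rw [← hadh, ← LinearMap.comp_apply, hf, LinearMap.zero_apply, hzero])
  · intro han x hx
    obtain ⟨f, hf⟩ := (Submodule.span Rᵐᵒᵖ {x}).exists_isProj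
    have hf0 : f = 0 :=
      han f (adjoint_comp_eq_zero_of_isProj hinj hadh
        (fun a ha b hb => form_span_singleton_eq_zero hsml hsmr hx ha hb) hf)
    simpa [hf0] using (hf.map_id x (Submodule.mem_span_singleton_self x)).symm

/-- Let `R` be a semisimple ring with involution `τ`, `M` a right `R`-module
and `h : M × M → R` a nonsingular hermitian form over `(R,τ)` with adjoint involution `ad_h` on
`End_R(M)`.  Then `h` is anisotropic iff `ad_h` is anisotropic.  (Right `R`-modules are encoded
as left `Rᵐᵒᵖ`-modules, `x·r := (op r) • x`.) -/
theorem stmt_12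
    {R M : Type*} [Ring R] [IsSemisimpleRing R]
    [AddCommGroup M] [Module Rᵐᵒᵖ M]
    -- `τ` is an involution on `R`:
    (τ : R → R)
    (hτadd : ∀ x y, τ (x + y) = τ x + τ y)
    (hτmul : ∀ x y, τ (x * y) = τ y * τ x)
    (hτinv : ∀ x, τ (τ x) = x)
    -- `h` is a hermitian form over `(R,τ)`:
    (h : M → M → R)
    (haddl : ∀ x y z, h (x + y) z = h x z + h y z)
    (haddr : ∀ x y z, h x (y + z) = h x y + h x z)
    (hsml : ∀ (r : R) (x y : M), h ((MulOpposite.op r) • x) y = τ r * h x y)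
    (hsmr : ∀ (r : R) (x y : M), h x ((MulOpposite.op r) • y) = h x y * r)
    (hherm : ∀ x y, h x y = τ (h y x))
    -- `h` is nonsingular: the induced map `M → Hom_R(M,R)` is bijective:
    (hinj : ∀ x : M, (∀ y, h x y = 0) → x = 0)
    (hsurj : ∀ f : M → R, (∀ y z, f (y + z) = f y + f z) →
      (∀ (r : R) (y : M), f ((MulOpposite.op r) • y) = f y * r) → ∃ x, ∀ y, h x y = f y)
    -- `ad_h` is the adjoint involution on `End_R(M)`:
    (adh : (M →ₗ[Rᵐᵒᵖ] M) → (M →ₗ[Rᵐᵒᵖ] M))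
    (hadh : ∀ (f : M →ₗ[Rᵐᵒᵖ] M) (x y : M), h (adh f x) y = h x (f y)) :
    (∀ x : M, h x x = 0 → x = 0) ↔
      (∀ f : M →ₗ[Rᵐᵒᵖ] M, (adh f) ∘ₗ f = 0 → f = 0) :=
  stmt_12_general τ h haddl hsml hsmr hinj adh hadh
end

section
/- Let R be a semisimple ring with involution τ, let s₁, …, s_n be invertible τ-symmetric elements of R, and S = diag(s₁,…,s_n) ∈ M_n(R). Then for any r ∈ ℕ, the involution Int(S)∘τ^t on M_n(R) is r-anisotropic (i.e., the involution (Int(S)∘τ^t)^t on M_r(M_n(R)) is anisotropic) if and only if the hermitian form ⟨s₁,…,s_n⟩_τ is r-anisotropic (i.e., r×⟨s₁,…,s_n⟩_τ is anisotropic). -/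
/-!
Write `b(x, y) = ∑ₖ ∑ᵢ τ(xₖᵢ) sᵢ yₖᵢ` for the form `r × ⟨s₁,…,s_n⟩_τ`. For a block matrix
`X ∈ M_r(M_n(R))`, the `(i, j)` entry of the `(k, l)` block of `(Int(S)∘τ^t)^t(X) · X` is
`sᵢ · b(vₖᵢ, vₗⱼ)`, where `vₖᵢ = (t_p X_{m k p i})_{m, p}` with `t = S⁻¹`; this uses that
`t_p = s_p⁻¹` is again `τ`-symmetric. Hence the diagonal entries vanish exactly when the `vₖᵢ`
are isotropic, and conversely an isotropic vector `x` yields the block matrix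
`X_{m k p i} = s_p x_{m p}`, all of whose `vₖᵢ` equal `x`.
-/

section AntiMultiplicative

variable {R : Type*} [Ring R] {τ : R → R}

theorem map_one_of_fixed_of_mul_eq_one (hτmul : ∀ x y, τ (x * y) = τ y * τ x) {s t : R}
    (hs : τ s = s) (hst : s * t = 1) : τ 1 = 1 := by
  calc τ 1 = τ 1 * τ s * t := by rw [hs, mul_assoc, hst, mul_one]
    _ = 1 := by rw [← hτmul, mul_one, hs, hst]

theorem map_eq_of_fixed_of_mul_eq_one (hτmul : ∀ x y, τ (x * y) = τ y * τ x) {s t : R}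
    (hs : τ s = s) (hst : s * t = 1) : τ t = t := by
  calc τ t = τ t * τ s * t := by rw [hs, mul_assoc, hst, mul_one]
    _ = t := by rw [← hτmul, hst, map_one_of_fixed_of_mul_eq_one hτmul hs hst, one_mul]

end AntiMultiplicative

section HermitianForm

variable {R : Type*} [Ring R] {ι κ : Type*} [Fintype ι] [Fintype κ]

/-- The hermitian form `(ι-fold) × ⟨s⟩_τ` on `ι → κ → R`. -/
def diagHermForm (τ : R → R) (s : κ → R) (x y : ι → κ → R) : R :=
  ∑ k, ∑ i, τ (x k i) * (s i * y k i)

def blockColumnVec (t : κ → R) (X : Matrix ι ι (Matrix κ κ R)) (k : ι) (i : κ) : ι → κ → R :=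
  fun m p => t p * X m k p i

theorem adjointTranspose_mul_self_apply {τ : R → R} (hτmul : ∀ x y, τ (x * y) = τ y * τ x)
    [DecidableEq κ] {s t : κ → R} (hst : ∀ i, s i * t i = 1) (ht : ∀ i, τ (t i) = t i)
    {θ : Matrix κ κ R → Matrix κ κ R}
    (hθ : ∀ a, θ a = Matrix.diagonal s * (Matrix.of fun i j => τ (a j i)) * Matrix.diagonal t)
    (X : Matrix ι ι (Matrix κ κ R)) (k l : ι) (i j : κ) :
    ((Matrix.of fun i j => θ (X j i)) * X) k l i j =
      s i * diagHermForm τ s (blockColumnVec t X k i) (blockColumnVec t X l j) := by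
  simp only [Matrix.mul_apply, Matrix.sum_apply, Matrix.of_apply, diagHermForm, blockColumnVec,
    Finset.mul_sum]
  refine Finset.sum_congr rfl fun m _ => Finset.sum_congr rfl fun p _ => ?_
  rw [hθ, Matrix.mul_diagonal, Matrix.diagonal_mul, Matrix.of_apply, hτmul, ht,
    ← mul_assoc (s p), hst, one_mul]
  simp only [mul_assoc]

end HermitianForm

theorem stmt_14_general
    {R : Type*} [Ring R]
    -- `τ` is an involution on `R`:
    (τ : R → R)
    (hτmul : ∀ x y, τ (x * y) = τ y * τ x)
    -- `s i` invertible and `τ`-symmetric, with inverses `t i`: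
    (n : ℕ) (s t : Fin n → R)
    (hst : ∀ i, s i * t i = 1 ∧ t i * s i = 1)
    (hsym : ∀ i, τ (s i) = s i)
    -- `θ = Int(S) ∘ τ^t` on `M_n(R)`:
    (θ : Matrix (Fin n) (Fin n) R → Matrix (Fin n) (Fin n) R)
    (hθ : ∀ a, θ a = Matrix.diagonal s * (Matrix.of fun i j => τ (a j i)) * Matrix.diagonal t)
    (r : ℕ) :
    -- `Int(S)∘τ^t` is `r`-anisotropic
    (∀ X : Matrix (Fin r) (Fin r) (Matrix (Fin n) (Fin n) R),
        (Matrix.of fun i j => θ (X j i)) * X = 0 → X = 0) ↔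
    -- iff `r × ⟨s₁,…,s_n⟩_τ` is anisotropic
    (∀ x : Fin r → Fin n → R, (∑ k, ∑ i, τ (x k i) * (s i * x k i)) = 0 → x = 0) := by
  have hs : ∀ i, IsUnit (s i) := fun i => ⟨⟨s i, t i, (hst i).1, (hst i).2⟩, rfl⟩
  have ht : ∀ i, IsUnit (t i) := fun i => ⟨⟨t i, s i, (hst i).2, (hst i).1⟩, rfl⟩
  have hgram := adjointTranspose_mul_self_apply (ι := Fin r) hτmul (fun i => (hst i).1)
    (fun i => map_eq_of_fixed_of_mul_eq_one hτmul (hsym i) (hst i).1) hθ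
  constructor
  · intro h x hx
    let X : Matrix (Fin r) (Fin r) (Matrix (Fin n) (Fin n) R) :=
      fun m _ => Matrix.of fun p _ => s p * x m p
    have hcol : ∀ k i, blockColumnVec t X k i = x := fun k i => by
      funext m p
      simp [X, blockColumnVec, ← mul_assoc, (hst p).2]
    have hX : X = 0 := h X <| by
      ext k l i j
      rw [hgram, hcol, hcol]
      exact mul_eq_zero_of_right _ hx
    funext m p
    have hXmp : s p * x m p = 0 := congr_fun (congr_fun (congr_fun (congr_fun hX m) m) p) p
    exact (hs p).mul_right_eq_zero.mp hXmp
  · intro h X hX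
    ext m k p i
    have hiso : diagHermForm τ s (blockColumnVec t X k i) (blockColumnVec t X k i) = 0 := by
      have := hgram X k k i i
      rwa [hX, Matrix.zero_apply, Matrix.zero_apply, eq_comm, (hs i).mul_right_eq_zero] at this
    exact (ht p).mul_right_eq_zero.mp (congr_fun (congr_fun (h _ hiso) m) p)

/-- Let `R` be a semisimple ring with involution `τ`, `s₁,…,s_n` invertible
`τ`-symmetric elements of `R` and `S = diag(s₁,…,s_n)`.  For any `r : ℕ`, the involution
`Int(S)∘τ^t` on `M_n(R)` is `r`-anisotropic (i.e. `(Int(S)∘τ^t)^t` on `M_r(M_n(R))` is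
anisotropic) iff the hermitian form `⟨s₁,…,s_n⟩_τ` is `r`-anisotropic. -/
theorem stmt_14
    {R : Type*} [Ring R] [IsSemisimpleRing R]
    -- `τ` is an involution on `R`:
    (τ : R → R)
    (hτadd : ∀ x y, τ (x + y) = τ x + τ y)
    (hτmul : ∀ x y, τ (x * y) = τ y * τ x)
    (hτinv : ∀ x, τ (τ x) = x)
    -- `s i` invertible and `τ`-symmetric, with inverses `t i`:
    (n : ℕ) (s t : Fin n → R)
    (hst : ∀ i, s i * t i = 1 ∧ t i * s i = 1)
    (hsym : ∀ i, τ (s i) = s i)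
    -- `θ = Int(S) ∘ τ^t` on `M_n(R)`:
    (θ : Matrix (Fin n) (Fin n) R → Matrix (Fin n) (Fin n) R)
    (hθ : ∀ a, θ a = Matrix.diagonal s * (Matrix.of fun i j => τ (a j i)) * Matrix.diagonal t)
    (r : ℕ) :
    -- `Int(S)∘τ^t` is `r`-anisotropic
    (∀ X : Matrix (Fin r) (Fin r) (Matrix (Fin n) (Fin n) R),
        (Matrix.of fun i j => θ (X j i)) * X = 0 → X = 0) ↔
    -- iff `r × ⟨s₁,…,s_n⟩_τ` is anisotropic
    (∀ x : Fin r → Fin n → R, (∑ k, ∑ i, τ (x k i) * (s i * x k i)) = 0 → x = 0) :=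
  stmt_14_general τ hτmul n s t hst hsym θ hθ r
end
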